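/- arXiv:1806.06808 — 5 statements merged into one kernel-verified Lean document; each statement's English description precedes it below -/
import Mathlib

section
/- Let n ≥ 1 and let A ∈ ℝ^{n×n} be the tridiagonal matrix with diagonal entries a_C, subdiagonal entries −a_W and superdiagonal entries −a_E, where a_W = d h⁻² B(−P), a_E = d h⁻² B(P), a_C = a_W + a_E, with d = ε + μb > 0, b > 0, h > 0 and P = bh/d. Then A is invertible and all entries of A⁻¹ are nonnegative (i.e., A is an M-matrix of monotone type); in particular the complete flux scheme linear system A φ = B s + b has a unique solution for every right-hand side. -/
/-- Bernoulli function `B(z) = z / (e^z − 1)`. -/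
noncomputable def Bern (z : ℝ) : ℝ := z / (Real.exp z - 1)

/-- The tridiagonal complete flux scheme matrix with diagonal `a_C`,
subdiagonal `−a_W` and superdiagonal `−a_E`, where
`a_W = d h⁻² B(−P)`, `a_E = d h⁻² B(P)`, `a_C = a_W + a_E`, `P = b h / d`. -/
noncomputable def cfsMatrix (b d h : ℝ) (n : ℕ) : Matrix (Fin n) (Fin n) ℝ :=
  Matrix.of fun i j =>
    if (i : ℕ) = (j : ℕ) then d / h ^ 2 * Bern (-(b * h / d)) + d / h ^ 2 * Bern (b * h / d)
    else if (i : ℕ) = (j : ℕ) + 1 then -(d / h ^ 2 * Bern (-(b * h / d)))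
    else if (i : ℕ) + 1 = (j : ℕ) then -(d / h ^ 2 * Bern (b * h / d))
    else 0

/-!
Since `B(-P) = e^P B(P)`, the matrix is `a_E` times the tridiagonal matrix `T_r` with diagonal
`1 + r`, subdiagonal `-r` and superdiagonal `-1`, where `r = e^P > 1`. The inverse of `T_r` is
its discrete Green's function, which is explicit: for a fixed column `k` it is built from the
two solutions `1` and `r^i` of the homogeneous recurrence `-r g(i-1) + (1+r) g(i) - g(i+1) = 0`,
vanishing at both ends of the grid and with a unit jump at `k`. For `r > 1` every factor of that
formula has a fixed sign, so the inverse is nonnegative.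
-/

open Matrix Finset

lemma Bern_pos {z : ℝ} (hz : 0 < z) : 0 < Bern z :=
  div_pos hz (by linarith [Real.add_one_lt_exp hz.ne'])

lemma Bern_neg (z : ℝ) : Bern (-z) = Real.exp z * Bern z := by
  rcases eq_or_ne z 0 with rfl | hz
  · simp [Bern]
  have hexp : Real.exp z ≠ 1 := (Real.exp_eq_one_iff z).not.mpr hz
  have hexp₁ : Real.exp z - 1 ≠ 0 := sub_ne_zero.mpr hexp
  have hexp₂ : 1 - Real.exp z ≠ 0 := sub_ne_zero.mpr hexp.symm
  rw [Bern, Bern, Real.exp_neg]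
  field_simp
  ring

noncomputable def convDiffMatrix (r : ℝ) (n : ℕ) : Matrix (Fin n) (Fin n) ℝ :=
  Matrix.of fun i j =>
    if (i : ℕ) = (j : ℕ) then 1 + r
    else if (i : ℕ) = (j : ℕ) + 1 then -r
    else if (i : ℕ) + 1 = (j : ℕ) then -1
    else 0

lemma cfsMatrix_eq_smul_convDiffMatrix (b d h : ℝ) (n : ℕ) :
    cfsMatrix b d h n =
      (d / h ^ 2 * Bern (b * h / d)) • convDiffMatrix (Real.exp (b * h / d)) n := by
  ext i j
  simp only [cfsMatrix, convDiffMatrix, Bern_neg, Matrix.smul_apply, of_apply, smul_eq_mul]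
  split_ifs <;> ring

lemma sum_range_ite_eq_succ (c : ℕ → ℝ) (h0 : c 0 = 0) {p n : ℕ} (hp : p ≤ n) :
    ∑ j ∈ range n, (if p = j + 1 then c (j + 1) else 0) = c p := by
  have := sum_range_succ' (fun j => if p = j then c j else 0) n
  simp only [sum_ite_eq, mem_range, Nat.lt_succ_of_le hp, if_true] at this
  rw [this]
  split_ifs <;> simp_all

lemma sum_range_ite_succ_eq (c : ℕ → ℝ) {p n : ℕ} (hp : p < n) (hn : c (n + 1) = 0) :
    ∑ j ∈ range n, (if p + 1 = j then c (j + 1) else 0) = c (p + 2) := by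
  rw [sum_ite_eq]
  split_ifs with h
  · rfl
  · rw [show p + 2 = n + 1 by simp at h; omega, hn]

lemma convDiffMatrix_mulVec (r : ℝ) {n : ℕ} (f : ℕ → ℝ) (h0 : f 0 = 0) (hn : f (n + 1) = 0)
    (i : Fin n) :
    (convDiffMatrix r n *ᵥ fun j => f (j + 1)) i =
      -(r * f i) + (1 + r) * f (i + 1) - f (i + 2) := by
  have hterm : ∀ j : ℕ, (if (i : ℕ) = j then 1 + r else if (i : ℕ) = j + 1 then -r
      else if (i : ℕ) + 1 = j then -1 else 0) * f (j + 1) =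
      (if (i : ℕ) = j then (1 + r) * f (j + 1) else 0) +
        (if (i : ℕ) = j + 1 then -(r * f (j + 1)) else 0) -
        (if (i : ℕ) + 1 = j then f (j + 1) else 0) := by
    intro j
    split_ifs <;> first | omega | ring
  simp only [mulVec, dotProduct, convDiffMatrix, of_apply]
  rw [Fin.sum_univ_eq_sum_range (fun j => (if (i : ℕ) = j then 1 + r
      else if (i : ℕ) = j + 1 then -r else if (i : ℕ) + 1 = j then -1 else 0) * f (j + 1)),
    sum_congr rfl fun j _ => hterm j, sum_sub_distrib, sum_add_distrib, sum_ite_eq,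
    if_pos (mem_range.mpr i.isLt),
    sum_range_ite_eq_succ (fun j => -(r * f j)) (by simp [h0]) i.isLt.le,
    sum_range_ite_succ_eq f i.isLt hn]
  ring

noncomputable def greenFun (r : ℝ) (m i k : ℕ) : ℝ :=
  (r ^ min i k - 1) * (r ^ m - r ^ max i k) / ((r - 1) * r ^ k * (r ^ m - 1))

lemma greenFun_zero_left (r : ℝ) (m k : ℕ) : greenFun r m 0 k = 0 := by
  simp [greenFun]

lemma greenFun_self_left (r : ℝ) {m k : ℕ} (hk : k ≤ m) : greenFun r m m k = 0 := by
  simp [greenFun, max_eq_left hk]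

lemma greenFun_nonneg {r : ℝ} (hr : 1 ≤ r) {m i k : ℕ} (hi : i ≤ m) (hk : k ≤ m) :
    0 ≤ greenFun r m i k := by
  have h1 : 1 ≤ r ^ min i k := one_le_pow₀ hr
  have h2 : r ^ max i k ≤ r ^ m := pow_le_pow_right₀ hr (max_le hi hk)
  have h3 : 1 ≤ r ^ k := one_le_pow₀ hr
  have h4 : 1 ≤ r ^ m := one_le_pow₀ hr
  unfold greenFun
  apply div_nonneg <;> apply mul_nonneg <;> try apply mul_nonneg
  all_goals linarith

lemma greenFun_recurrence {r : ℝ} (hr : 1 < r) {m i k : ℕ} (him : i + 2 ≤ m) :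
    -(r * greenFun r m i k) + (1 + r) * greenFun r m (i + 1) k - greenFun r m (i + 2) k =
      if i + 1 = k then 1 else 0 := by
  have hr0 : r ≠ 0 := by positivity
  have hr1 : r - 1 ≠ 0 := by linarith
  have hrm : r ^ m - 1 ≠ 0 := by linarith [one_lt_pow₀ hr (show m ≠ 0 by omega)]
  have hrk : r ^ k ≠ 0 := pow_ne_zero _ hr0
  unfold greenFun
  rcases lt_trichotomy (i + 1) k with hlt | rfl | hgt
  · rw [if_neg hlt.ne, min_eq_left (by omega), min_eq_left (by omega), min_eq_left (by omega),
      max_eq_right (by omega), max_eq_right (by omega), max_eq_right (by omega)]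
    field_simp
    ring
  · rw [if_pos rfl, min_eq_left (by omega), min_eq_right le_rfl, min_eq_right (by omega),
      max_eq_right (by omega), max_eq_left le_rfl, max_eq_left (by omega)]
    field_simp
    ring
  · rw [if_neg hgt.ne', min_eq_right (by omega), min_eq_right (by omega), min_eq_right (by omega),
      max_eq_left (by omega), max_eq_left (by omega), max_eq_left (by omega)]
    field_simp
    ring

noncomputable def greenMatrix (r : ℝ) (n : ℕ) : Matrix (Fin n) (Fin n) ℝ :=
  Matrix.of fun i k => greenFun r (n + 1) (i + 1) (k + 1)

lemma convDiffMatrix_mul_greenMatrix {r : ℝ} (hr : 1 < r) (n : ℕ) :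
    convDiffMatrix r n * greenMatrix r n = 1 := by
  ext i k
  have hcol : (convDiffMatrix r n * greenMatrix r n) i k =
      (convDiffMatrix r n *ᵥ fun j => greenFun r (n + 1) (j + 1) (k + 1)) i := rfl
  rw [hcol, convDiffMatrix_mulVec r (fun j => greenFun r (n + 1) j (k + 1))
      (greenFun_zero_left r _ _) (greenFun_self_left r (by omega)),
    greenFun_recurrence hr (by omega), one_apply]
  simp [Fin.ext_iff]

lemma greenMatrix_nonneg {r : ℝ} (hr : 1 ≤ r) {n : ℕ} (i k : Fin n) :
    0 ≤ greenMatrix r n i k :=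
  greenFun_nonneg hr (by omega) (by omega)

theorem cfs_matrix_M_matrix_general (b d h : ℝ) (hb : 0 < b) (hd : 0 < d) (hh : 0 < h)
    (n : ℕ) :
    IsUnit (cfsMatrix b d h n) ∧
    (∀ i j : Fin n, 0 ≤ (cfsMatrix b d h n)⁻¹ i j) ∧
    (∀ rhs : Fin n → ℝ, ∃! φv : Fin n → ℝ, (cfsMatrix b d h n).mulVec φv = rhs) := by
  set P := b * h / d
  set c := d / h ^ 2 * Bern P
  have hP : 0 < P := by positivity
  have hr : 1 < Real.exp P := Real.one_lt_exp_iff.mpr hP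
  have hc : 0 < c := mul_pos (by positivity) (Bern_pos hP)
  have hright : cfsMatrix b d h n * (c⁻¹ • greenMatrix (Real.exp P) n) = 1 := by
    rw [cfsMatrix_eq_smul_convDiffMatrix, smul_mul_smul_comm, mul_inv_cancel₀ hc.ne', one_smul,
      convDiffMatrix_mul_greenMatrix hr]
  have hU : IsUnit (cfsMatrix b d h n) := IsUnit.of_mul_eq_one _ hright
  refine ⟨hU, fun i j => ?_, fun rhs => ?_⟩
  · rw [inv_eq_right_inv hright]
    exact mul_nonneg (inv_nonneg.mpr hc.le) (greenMatrix_nonneg hr.le i j)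
  · exact Function.Bijective.existsUnique
      ⟨mulVec_injective_iff_isUnit.mpr hU, mulVec_surjective_iff_isUnit.mpr hU⟩ rhs

/-- the complete flux scheme matrix is invertible, its inverse has
nonnegative entries (M-matrix of monotone type), and the linear system
`A φ = rhs` has a unique solution for every right-hand side. -/
theorem cfs_matrix_M_matrix (b d h : ℝ) (hb : 0 < b) (hd : 0 < d) (hh : 0 < h)
    (n : ℕ) (hn : 1 ≤ n) :
    IsUnit (cfsMatrix b d h n) ∧
    (∀ i j : Fin n, 0 ≤ (cfsMatrix b d h n)⁻¹ i j) ∧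
    (∀ rhs : Fin n → ℝ, ∃! φv : Fin n → ℝ, (cfsMatrix b d h n).mulVec φv = rhs) :=
  cfs_matrix_M_matrix_general b d h hb hd hh n
end

section
/- Three-term decomposition: let m ≥ 1 and s ∈ C^m([0,1]), and fix boundary values φ_L, φ_R. There exist a function A₀ ∈ C^{m+1}([0,1]), a constant B₀, a function F₀ ∈ C^{m−1}([0,1]) and a constant c > 0, all independent of d, such that for every d ∈ (0,1] the solution φ of −d φ'' + b φ' = s on (0,1), φ(0) = φ_L, φ(1) = φ_R, can be written as φ(x) = A₀(x) + B₀ exp(−b d⁻¹ (1 − x)) + d R₀(x), where R₀ satisfies −d R₀'' + b R₀' = F₀ on (0,1) with R₀(1) = 0 and |R₀(0)| ≤ c. -/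
/-!
Take for `A₀` the solution of the reduced problem `b A₀' = s`, `A₀(0) = φ_L`, and put
`B₀ = φ_R - A₀(1)`. The layer `exp (-(b/d) (1 - x))` is annihilated by `L = -d ∂² + b ∂`,
while `L A₀ = s - d s'/b`; hence `d R₀ := φ - A₀ - B₀ exp (-(b/d) (1 - x))` satisfies
`L R₀ = s'/b`, vanishes at `1`, and `R₀(0) = -B₀ d⁻¹ exp (-b/d)` is bounded by `|B₀|/b`
because `t exp (-t) ≤ 1`.
-/

open Real

theorem ContDiff.intervalIntegral_right {E : Type*} [NormedAddCommGroup E] [NormedSpace ℝ E]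
    [CompleteSpace E] {s : ℝ → E} {n : ℕ∞} (hs : ContDiff ℝ n s) (a : ℝ) :
    ContDiff ℝ (n + 1) (fun x => ∫ t in a..x, s t) := by
  have hderiv : deriv (fun x => ∫ t in a..x, s t) = s :=
    funext (hs.continuous.deriv_integral s a)
  refine contDiff_succ_iff_deriv.mpr ⟨fun x => ?_, by simp, by rwa [hderiv]⟩
  exact (hs.continuous.integral_hasStrictDerivAt a x).hasDerivAt.differentiableAt

theorem iteratedDeriv_two_eq_deriv_deriv {𝕜 F : Type*} [NontriviallyNormedField 𝕜]
    [NormedAddCommGroup F] [NormedSpace 𝕜 F] (f : 𝕜 → F) :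
    iteratedDeriv 2 f = deriv (deriv f) := by
  rw [iteratedDeriv_succ, iteratedDeriv_one]

theorem inv_mul_exp_neg_div_le_inv {b d : ℝ} (hb : 0 < b) (hd : 0 < d) :
    d⁻¹ * exp (-(b / d)) ≤ b⁻¹ := by
  have hexp : b / d ≤ exp (b / d) := by linarith [add_one_le_exp (b / d)]
  rw [exp_neg, ← mul_inv, inv_le_inv₀ (by positivity) hb]
  rwa [div_le_iff₀' hd] at hexp

noncomputable def convDiff (d b : ℝ) (g : ℝ → ℝ) (x : ℝ) : ℝ :=
  -d * iteratedDeriv 2 g x + b * deriv g x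

section convDiff

variable {d b : ℝ} {f g : ℝ → ℝ} {x : ℝ}

theorem convDiff_sub (hf : ContDiffAt ℝ 2 f x) (hg : ContDiffAt ℝ 2 g x) :
    convDiff d b (f - g) x = convDiff d b f x - convDiff d b g x := by
  have hderiv : deriv (f - g) x = deriv f x - deriv g x :=
    deriv_sub (hf.differentiableAt two_ne_zero) (hg.differentiableAt two_ne_zero)
  simp only [convDiff, iteratedDeriv_sub hf hg, hderiv]
  ring

theorem convDiff_const_smul (c : ℝ) (f : ℝ → ℝ) :
    convDiff d b (c • f) x = c * convDiff d b f x := by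
  simp only [convDiff, iteratedDeriv_const_smul_field, deriv_const_smul_field, smul_eq_mul]
  ring

theorem convDiff_boundaryLayer (hd : d ≠ 0) :
    convDiff d b (fun y => exp (-(b / d) * (1 - y))) x = 0 := by
  have hderiv : deriv (fun y => exp (-(b / d) * (1 - y))) =
      fun y => b / d * exp (-(b / d) * (1 - y)) := by
    funext y
    have hlin : HasDerivAt (fun y => -(b / d) * (1 - y)) (b / d) y := by
      simpa using ((hasDerivAt_id y).const_sub 1).const_mul (-(b / d))
    simpa only [mul_comm] using hlin.exp.deriv
  simp only [convDiff, iteratedDeriv_two_eq_deriv_deriv, hderiv, deriv_const_mul_field]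
  field_simp
  ring

theorem convDiff_primitive (hb : b ≠ 0) {s : ℝ → ℝ} (hs : ContDiff ℝ 1 s) (c : ℝ) :
    convDiff d b (fun y => c + b⁻¹ * ∫ t in (0 : ℝ)..y, s t) x =
      s x - d * (b⁻¹ * deriv s x) := by
  have hderiv : deriv (fun y => c + b⁻¹ * ∫ t in (0 : ℝ)..y, s t) = fun y => b⁻¹ * s y := by
    funext y
    rw [deriv_const_add, deriv_const_mul_field, hs.continuous.deriv_integral]
  simp only [convDiff, iteratedDeriv_two_eq_deriv_deriv, hderiv, deriv_const_mul_field]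
  field_simp
  ring

end convDiff

/-- three-term decomposition of the solution of
`−d φ'' + b φ' = s`, `φ(0) = φ_L`, `φ(1) = φ_R`:
`φ(x) = A₀(x) + B₀ exp(−b d⁻¹ (1−x)) + d R₀(x)` with `A₀ ∈ C^{m+1}`,
`F₀ ∈ C^{m−1}` and `c > 0` independent of `d`, where
`−d R₀'' + b R₀' = F₀`, `R₀(1) = 0` and `|R₀(0)| ≤ c`. -/
theorem cfs_three_term_decomposition (b : ℝ) (hb : 0 < b)
    (m : ℕ) (hm : 1 ≤ m) (s : ℝ → ℝ) (hs : ContDiff ℝ (m : ℕ∞) s) (φL φR : ℝ) :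
    ∃ A₀ : ℝ → ℝ, ContDiff ℝ ((m + 1 : ℕ) : ℕ∞) A₀ ∧
    ∃ B₀ : ℝ, ∃ F₀ : ℝ → ℝ, ContDiff ℝ ((m - 1 : ℕ) : ℕ∞) F₀ ∧
    ∃ c > (0 : ℝ), ∀ d ∈ Set.Ioc (0 : ℝ) 1,
      ∀ φ : ℝ → ℝ, ContDiff ℝ 2 φ →
        (∀ x ∈ Set.Ioo (0 : ℝ) 1, -d * iteratedDeriv 2 φ x + b * deriv φ x = s x) →
        φ 0 = φL → φ 1 = φR →
        ∃ R₀ : ℝ → ℝ, ContDiff ℝ 2 R₀ ∧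
          (∀ x ∈ Set.Icc (0 : ℝ) 1,
            φ x = A₀ x + B₀ * Real.exp (-(b / d) * (1 - x)) + d * R₀ x) ∧
          (∀ x ∈ Set.Ioo (0 : ℝ) 1,
            -d * iteratedDeriv 2 R₀ x + b * deriv R₀ x = F₀ x) ∧
          R₀ 1 = 0 ∧ |R₀ 0| ≤ c := by
  obtain ⟨k, rfl⟩ : ∃ k, m = k + 1 := ⟨m - 1, by omega⟩
  set A₀ : ℝ → ℝ := fun x => φL + b⁻¹ * ∫ t in (0 : ℝ)..x, s t
  have hA₀ : ContDiff ℝ ((k + 1 + 1 : ℕ) : ℕ∞) A₀ := by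
    simpa using contDiff_const.add (contDiff_const.mul (hs.intervalIntegral_right 0))
  set B₀ := φR - A₀ 1
  refine ⟨A₀, hA₀, B₀, fun x => b⁻¹ * deriv s x, ?_, |B₀| / b + 1, by positivity, ?_⟩
  · exact contDiff_const.mul (ContDiff.deriv' (by simpa using hs))
  intro d ⟨hd, _⟩ φ hφ hode hφ0 hφ1
  set E : ℝ → ℝ := fun x => exp (-(b / d) * (1 - x))
  have hE : ContDiff ℝ 2 E := by fun_prop
  have hA₀' : ContDiff ℝ 2 A₀ := hA₀.of_le (by simp [add_assoc, one_add_one_eq_two])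
  refine ⟨d⁻¹ • (φ - A₀ - B₀ • E), ((hφ.sub hA₀').sub (hE.const_smul B₀)).const_smul d⁻¹,
    fun x _ => ?_, fun x hx => ?_, by simp [E, hφ1, B₀], ?_⟩
  · show φ x = A₀ x + B₀ * E x + d * (d⁻¹ * (φ x - A₀ x - B₀ * E x))
    rw [mul_inv_cancel_left₀ hd.ne']
    ring
  · change convDiff d b _ x = _
    rw [convDiff_const_smul,
      convDiff_sub (f := φ - A₀) (g := B₀ • E) (hφ.sub hA₀').contDiffAt
        (hE.const_smul B₀).contDiffAt,
      convDiff_sub hφ.contDiffAt hA₀'.contDiffAt, convDiff_const_smul,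
      convDiff_boundaryLayer hd.ne', convDiff_primitive hb.ne' (hs.of_le (by simp)),
      show convDiff d b φ x = s x from hode x hx]
    field_simp
    ring
  · calc |(d⁻¹ • (φ - A₀ - B₀ • E)) 0| = |B₀| * (d⁻¹ * exp (-(b / d))) := by
          simp only [E, A₀, Pi.smul_apply, Pi.sub_apply, smul_eq_mul, hφ0,
            intervalIntegral.integral_same, mul_zero, add_zero, sub_self, sub_zero, mul_one,
            zero_sub, mul_neg, abs_neg, abs_mul, abs_inv, abs_of_pos hd, abs_exp, neg_mul]
          ring
      _ ≤ |B₀| * b⁻¹ := by gcongr; exact inv_mul_exp_neg_div_le_inv hb hd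
      _ ≤ |B₀| / b + 1 := by rw [div_eq_mul_inv]; linarith
end

section
/- Integral representation of the flux: let a < c, set m = (a+c)/2, and let b, s : [a,c] → ℝ be continuous with diffusion coefficient D(x) = ε + μ b(x) continuous and strictly positive on [a,c], where ε > 0 and μ ≥ 0 are constants. Define λ = b/D, Λ(x) = ∫_m^x λ(ξ) dξ and S(x) = ∫_m^x s(ξ) dξ. Suppose φ ∈ C¹([a,c]) is such that the flux f := b φ − D φ' is differentiable with f' = s on (a,c), and write φ_a = φ(a), φ_c = φ(c). Then f(m) = (φ_a e^{−Λ(a)} − φ_c e^{−Λ(c)}) / ∫_a^c D(x)⁻¹ e^{−Λ(x)} dx − ( ∫_a^c D(x)⁻¹ e^{−Λ(x)} S(x) dx ) / ∫_a^c D(x)⁻¹ e^{−Λ(x)} dx. -/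
/-!
With `D = ε + μ b`, the flux `f = b φ - D φ'` satisfies `f' = s`, so `f = f(m) + S` on `(a,c)`.
The integrating factor `e^{-Λ}` turns the definition of the flux into
`(φ e^{-Λ})' = -D⁻¹ e^{-Λ} f = -D⁻¹ e^{-Λ} (f(m) + S)`; integrating over `[a,c]` gives a linear
equation for `f(m)` whose coefficient `∫_a^c D⁻¹ e^{-Λ}` is positive.
-/

open Set intervalIntegral MeasureTheory

section Primitive

variable {f : ℝ → ℝ} {a c m : ℝ}

theorem ContinuousOn.continuousOn_primitive_Icc (hf : ContinuousOn f (Icc a c))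
    (hm : m ∈ Icc a c) : ContinuousOn (fun x => ∫ t in m..x, f t) (Icc a c) := by
  have hIcc : Icc a c = uIcc a c := (uIcc_of_le (hm.1.trans hm.2)).symm
  rw [hIcc] at hf hm ⊢
  exact continuousOn_primitive_interval' hf.intervalIntegrable hm

theorem ContinuousOn.hasDerivAt_primitive (hf : ContinuousOn f (Icc a c)) (hm : m ∈ Icc a c)
    {x : ℝ} (hx : x ∈ Ioo a c) : HasDerivAt (fun y => ∫ t in m..y, f t) (f x) x :=
  integral_hasDerivAt_right
    ((hf.mono (uIcc_subset_Icc hm (Ioo_subset_Icc_self hx))).intervalIntegrable)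
    ((hf.mono Ioo_subset_Icc_self).stronglyMeasurableAtFilter isOpen_Ioo x hx)
    (hf.continuousAt (Icc_mem_nhds hx.1 hx.2))

end Primitive

theorem eq_add_integral_of_hasDerivAt_Ioo {f f' : ℝ → ℝ} {a c m x : ℝ}
    (hf : ∀ y ∈ Ioo a c, HasDerivAt f (f' y) y) (hint : IntervalIntegrable f' volume m x)
    (hm : m ∈ Ioo a c) (hx : x ∈ Ioo a c) : f x = f m + ∫ t in m..x, f' t := by
  have hsub : uIcc m x ⊆ Ioo a c := Icc_subset_Ioo (lt_min hm.1 hx.1) (max_lt hm.2 hx.2)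
  rw [integral_eq_sub_of_hasDerivAt (fun y hy => hf y (hsub hy)) hint]
  ring

theorem integral_inv_mul_exp_neg_mul_eq_of_flux {a c : ℝ} (hac : a ≤ c)
    {b D φ φ' Λ F : ℝ → ℝ} (hφ : ContinuousOn φ (Icc a c)) (hΛ : ContinuousOn Λ (Icc a c))
    (hφ' : ∀ x ∈ Ioo a c, HasDerivAt φ (φ' x) x)
    (hΛ' : ∀ x ∈ Ioo a c, HasDerivAt Λ (b x / D x) x) (hD : ∀ x ∈ Ioo a c, D x ≠ 0)
    (hF : ∀ x ∈ Ioo a c, b x * φ x - D x * φ' x = F x)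
    (hint : IntervalIntegrable (fun x => (D x)⁻¹ * Real.exp (-Λ x) * F x) volume a c) :
    ∫ x in a..c, (D x)⁻¹ * Real.exp (-Λ x) * F x =
      φ a * Real.exp (-Λ a) - φ c * Real.exp (-Λ c) := by
  have hderiv : ∀ x ∈ Ioo a c, HasDerivAt (fun y => -(φ y * Real.exp (-Λ y)))
      ((D x)⁻¹ * Real.exp (-Λ x) * F x) x := by
    intro x hx
    refine ((hφ' x hx).mul (hΛ' x hx).neg.exp).neg.congr_deriv ?_
    rw [Pi.neg_apply, ← hF x hx]
    field_simp [hD x hx]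
    ring
  have hcont : ContinuousOn (fun y => -(φ y * Real.exp (-Λ y))) (Icc a c) :=
    (hφ.mul hΛ.neg.rexp).neg
  rw [integral_eq_sub_of_hasDerivAt_of_le hac hcont hderiv hint]
  ring

theorem flux_integral_representation_general (a c ε μ : ℝ) (hac : a < c)
    (bf s : ℝ → ℝ)
    (hbf : ContinuousOn bf (Set.Icc a c)) (hscont : ContinuousOn s (Set.Icc a c))
    (hD : ∀ x ∈ Set.Icc a c, 0 < ε + μ * bf x)
    (φ : ℝ → ℝ) (hφ : ContDiff ℝ 1 φ)
    (hflux : ∀ x ∈ Set.Ioo a c,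
      HasDerivAt (fun t => bf t * φ t - (ε + μ * bf t) * deriv φ t) (s x) x) :
    let m := (a + c) / 2
    let Λ : ℝ → ℝ := fun x => ∫ ξ in m..x, bf ξ / (ε + μ * bf ξ)
    let S : ℝ → ℝ := fun x => ∫ ξ in m..x, s ξ
    bf m * φ m - (ε + μ * bf m) * deriv φ m =
      (φ a * Real.exp (-Λ a) - φ c * Real.exp (-Λ c)) /
        (∫ x in a..c, (ε + μ * bf x)⁻¹ * Real.exp (-Λ x)) -
      (∫ x in a..c, (ε + μ * bf x)⁻¹ * Real.exp (-Λ x) * S x) /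
        (∫ x in a..c, (ε + μ * bf x)⁻¹ * Real.exp (-Λ x)) := by
  intro m Λ S
  have hm : m ∈ Ioo a c := ⟨left_lt_add_div_two.2 hac, add_div_two_lt_right.2 hac⟩
  have hmIcc : m ∈ Icc a c := Ioo_subset_Icc_self hm
  have hDc : ContinuousOn (fun x => ε + μ * bf x) (Icc a c) := by fun_prop
  have hbD : ContinuousOn (fun x => bf x / (ε + μ * bf x)) (Icc a c) :=
    hbf.div hDc fun x hx => (hD x hx).ne'
  have hΛ : ContinuousOn Λ (Icc a c) := hbD.continuousOn_primitive_Icc hmIcc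
  have hS : ContinuousOn S (Icc a c) := hscont.continuousOn_primitive_Icc hmIcc
  have hw : ContinuousOn (fun x => (ε + μ * bf x)⁻¹ * Real.exp (-Λ x)) (Icc a c) :=
    (hDc.inv₀ fun x hx => (hD x hx).ne').mul hΛ.neg.rexp
  have hwint := hw.intervalIntegrable_of_Icc (μ := volume) hac.le
  have hwSint : IntervalIntegrable (fun x => (ε + μ * bf x)⁻¹ * Real.exp (-Λ x) * S x) volume a c :=
    (hw.mul hS).intervalIntegrable_of_Icc hac.le
  set K := bf m * φ m - (ε + μ * bf m) * deriv φ m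
  have hKS : ∀ x ∈ Ioo a c, bf x * φ x - (ε + μ * bf x) * deriv φ x = K + S x := fun x hx =>
    eq_add_integral_of_hasDerivAt_Ioo hflux
      ((hscont.mono (uIcc_subset_Icc hmIcc (Ioo_subset_Icc_self hx))).intervalIntegrable) hm hx
  have hbalance := integral_inv_mul_exp_neg_mul_eq_of_flux hac.le hφ.continuous.continuousOn hΛ
    (fun x _ => (hφ.differentiable one_ne_zero x).hasDerivAt)
    (fun x hx => hbD.hasDerivAt_primitive hmIcc hx)
    (fun x hx => (hD x (Ioo_subset_Icc_self hx)).ne')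
    hKS ((hw.mul (continuousOn_const.add hS)).intervalIntegrable_of_Icc hac.le)
  simp only [mul_add] at hbalance
  rw [integral_add (hwint.mul_const K) hwSint, intervalIntegral.integral_mul_const] at hbalance
  have hpos : 0 < ∫ x in a..c, (ε + μ * bf x)⁻¹ * Real.exp (-Λ x) :=
    intervalIntegral_pos_of_pos_on hwint
      (fun x hx => mul_pos (inv_pos.2 (hD x (Ioo_subset_Icc_self hx))) (Real.exp_pos _)) hac
  rw [← sub_div, eq_div_iff hpos.ne']
  linarith

/-- integral representation of the flux at the midpoint
`m = (a+c)/2`: with `D = ε + μ b`, `λ = b/D`, `Λ(x) = ∫_m^x λ`,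
`S(x) = ∫_m^x s`, and `f = b φ − D φ'` satisfying `f' = s` on `(a,c)`,
`f(m) = (φ(a) e^{−Λ(a)} − φ(c) e^{−Λ(c)}) / ∫_a^c D⁻¹ e^{−Λ}
        − (∫_a^c D⁻¹ e^{−Λ} S) / ∫_a^c D⁻¹ e^{−Λ}`. -/
theorem flux_integral_representation (a c ε μ : ℝ) (hac : a < c)
    (hε : 0 < ε) (hμ : 0 ≤ μ)
    (bf s : ℝ → ℝ)
    (hbf : ContinuousOn bf (Set.Icc a c)) (hscont : ContinuousOn s (Set.Icc a c))
    (hD : ∀ x ∈ Set.Icc a c, 0 < ε + μ * bf x)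
    (φ : ℝ → ℝ) (hφ : ContDiff ℝ 1 φ)
    (hflux : ∀ x ∈ Set.Ioo a c,
      HasDerivAt (fun t => bf t * φ t - (ε + μ * bf t) * deriv φ t) (s x) x) :
    let m := (a + c) / 2
    let Λ : ℝ → ℝ := fun x => ∫ ξ in m..x, bf ξ / (ε + μ * bf ξ)
    let S : ℝ → ℝ := fun x => ∫ ξ in m..x, s ξ
    bf m * φ m - (ε + μ * bf m) * deriv φ m =
      (φ a * Real.exp (-Λ a) - φ c * Real.exp (-Λ c)) /
        (∫ x in a..c, (ε + μ * bf x)⁻¹ * Real.exp (-Λ x)) -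
      (∫ x in a..c, (ε + μ * bf x)⁻¹ * Real.exp (-Λ x) * S x) /
        (∫ x in a..c, (ε + μ * bf x)⁻¹ * Real.exp (-Λ x)) :=
  flux_integral_representation_general a c ε μ hac bf s hbf hscont hD φ hφ hflux
end

section
/- Exactness of the complete flux scheme on the layer function: let ε > 0, μ ≥ 0, b > 0, d = ε + μ b, h > 0, P = b h / d, and let a_W = d h⁻² B(−P), a_E = d h⁻² B(P), a_C = a_W + a_E, where B(z) = z/(e^z − 1). Then for the function y(x) = exp(b d⁻¹ x) (equivalently, for y(x) = exp(−b d⁻¹ (1 − x))) one has −a_W y(x − h) + a_C y(x) − a_E y(x + h) = 0 for every x ∈ ℝ; that is, the discrete operator L^h annihilates the exact solution of the homogeneous constant-coefficient equation −d φ'' + b φ' = 0. -/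
/-- Complete flux scheme coefficient `a_W = d h⁻² B(−P)` with `P = b h / d`. -/
noncomputable def cfsAW (b d h : ℝ) : ℝ := d / h ^ 2 * Bern (-(b * h / d))

/-- Complete flux scheme coefficient `a_E = d h⁻² B(P)` with `P = b h / d`. -/
noncomputable def cfsAE (b d h : ℝ) : ℝ := d / h ^ 2 * Bern (b * h / d)

/-- Complete flux scheme coefficient `a_C = a_W + a_E`. -/
noncomputable def cfsAC (b d h : ℝ) : ℝ := cfsAW b d h + cfsAE b d h

/-! On `x ↦ exp (λ x + k)` with `λ = b / d` the stencil acts as multiplication by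
`a_W (1 - e^{-P}) + a_E (1 - e^{P})`, where `P = λ h`. The identity `B(z) (1 - e^z) = -z`
turns the two terms into `d h⁻² P` and `-d h⁻² P`, which cancel. -/

open Real

/-- At `z = 0` both sides vanish because `Bern 0 = 0 / 0 = 0`. -/
lemma bern_mul_one_sub_exp (z : ℝ) : Bern z * (1 - exp z) = -z := by
  rcases eq_or_ne z 0 with rfl | hz
  · simp [Bern]
  · have hexp : exp z - 1 ≠ 0 := sub_ne_zero.mpr (exp_eq_one_iff z |>.not.mpr hz)
    rw [Bern, ← neg_sub (exp z) 1, mul_neg, div_mul_cancel₀ _ hexp]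

lemma cfs_stencil_geometric_eq_zero (b d h u : ℝ) :
    -cfsAW b d h * (u * exp (-(b * h / d))) + cfsAC b d h * u
      - cfsAE b d h * (u * exp (b * h / d)) = 0 := by
  have hE := bern_mul_one_sub_exp (b * h / d)
  have hW := bern_mul_one_sub_exp (-(b * h / d))
  unfold cfsAC cfsAW cfsAE
  linear_combination d / h ^ 2 * u * (hW + hE)

lemma cfs_exact_on_exp (b d h k x : ℝ) :
    -cfsAW b d h * exp (b / d * (x - h) + k) + cfsAC b d h * exp (b / d * x + k)
      - cfsAE b d h * exp (b / d * (x + h) + k) = 0 := by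
  have hW : b / d * (x - h) + k = (b / d * x + k) + -(b * h / d) := by ring
  have hE : b / d * (x + h) + k = (b / d * x + k) + b * h / d := by ring
  rw [hW, hE, exp_add _ (-(b * h / d)), exp_add _ (b * h / d)]
  exact cfs_stencil_geometric_eq_zero b d h _

theorem cfs_exact_on_layer_general (ε μ b h : ℝ) :
    let d := ε + μ * b
    (∀ x : ℝ,
      -cfsAW b d h * Real.exp (b / d * (x - h)) + cfsAC b d h * Real.exp (b / d * x)
        - cfsAE b d h * Real.exp (b / d * (x + h)) = 0) ∧
    (∀ x : ℝ,
      -cfsAW b d h * Real.exp (-(b / d) * (1 - (x - h)))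
        + cfsAC b d h * Real.exp (-(b / d) * (1 - x))
        - cfsAE b d h * Real.exp (-(b / d) * (1 - (x + h))) = 0) := by
  intro d
  refine ⟨fun x => by simpa using cfs_exact_on_exp b d h 0 x, fun x => ?_⟩
  have hlayer (t : ℝ) : -(b / d) * (1 - t) = b / d * t + -(b / d) := by ring
  simp only [hlayer]
  exact cfs_exact_on_exp b d h _ x

/-- exactness of the complete flux scheme on the layer function:
the discrete operator `L^h` annihilates `y(x) = exp(b d⁻¹ x)` (equivalently
`y(x) = exp(−b d⁻¹ (1−x))`), the exact solution of `−d φ'' + b φ' = 0`. -/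
theorem cfs_exact_on_layer (ε μ b h : ℝ) (hε : 0 < ε) (hμ : 0 ≤ μ)
    (hb : 0 < b) (hh : 0 < h) :
    let d := ε + μ * b
    (∀ x : ℝ,
      -cfsAW b d h * Real.exp (b / d * (x - h)) + cfsAC b d h * Real.exp (b / d * x)
        - cfsAE b d h * Real.exp (b / d * (x + h)) = 0) ∧
    (∀ x : ℝ,
      -cfsAW b d h * Real.exp (-(b / d) * (1 - (x - h)))
        + cfsAC b d h * Real.exp (-(b / d) * (1 - x))
        - cfsAE b d h * Real.exp (-(b / d) * (1 - (x + h))) = 0) :=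
  cfs_exact_on_layer_general ε μ b h
end

section
/- Remainder estimate in the coarse-mesh regime: define the Taylor remainder R_q(x₁, x₂; f) = (1/q!) ∫_{x₁}^{x₂} (x₂ − x)^q f^{(q+1)}(x) dx. Let b > 0 and c₂ > 0. Then there exists C > 0, depending only on b and c₂, such that for all d ∈ (0,1], all h with d ≤ h ≤ 1, all x ∈ [h, 1−h], and every function z ∈ C³([0,1]) with |z^{(3)}(t)| ≤ c₂ (1 + d⁻² exp(−b d⁻¹ (1 − t))) on [0,1], one has, with P = b h / d and B(z) = z/(e^z − 1): d h⁻² B(−P) |R₂(x, x − h; z)| ≤ C ( h² + d h⁻¹ exp(−b d⁻¹ (1 − (x + h))) ). -/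
/-- Taylor remainder `R_q(x₁, x₂; f) = (1/q!) ∫_{x₁}^{x₂} (x₂ − x)^q f^{(q+1)}(x) dx`. -/
noncomputable def taylorR (q : ℕ) (x₁ x₂ : ℝ) (f : ℝ → ℝ) : ℝ :=
  (1 / (Nat.factorial q : ℝ)) * ∫ x in x₁..x₂, (x₂ - x) ^ q * iteratedDeriv (q + 1) f x

/-!
The remainder is at most `h³/2` times the supremum of `|z'''|` on `[x - h, x]`, where the layer
term is largest at `x`, and `B(-P) ≤ P / (1 - e^{-b})` because `P ≥ b`. The layer at `x` is the
layer at `x + h` times `e^{-P}`, and `P³ e^{-P} ≤ 3!` trades the factor `h² d⁻²` for `d h⁻¹`.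
-/

open Real Set

theorem abs_taylorR_le {q : ℕ} {x₁ x₂ M : ℝ} {f : ℝ → ℝ}
    (hM : ∀ t ∈ uIoc x₁ x₂, |iteratedDeriv (q + 1) f t| ≤ M) :
    |taylorR q x₁ x₂ f| ≤ M * |x₂ - x₁| ^ (q + 1) / q.factorial := by
  have hint : ‖∫ t in x₁..x₂, (x₂ - t) ^ q * iteratedDeriv (q + 1) f t‖
      ≤ |x₂ - x₁| ^ q * M * |x₂ - x₁| := by
    refine intervalIntegral.norm_integral_le_of_norm_le_const fun t ht => ?_
    rw [norm_mul, norm_pow, Real.norm_eq_abs, Real.norm_eq_abs]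
    exact mul_le_mul (pow_le_pow_left₀ (abs_nonneg _)
      (abs_sub_right_of_mem_uIcc (uIoc_subset_uIcc ht)) q) (hM t ht) (abs_nonneg _)
      (by positivity)
  rw [taylorR, abs_mul, abs_of_pos (by positivity), ← Real.norm_eq_abs]
  calc 1 / (q.factorial : ℝ) * ‖∫ t in x₁..x₂, (x₂ - t) ^ q * iteratedDeriv (q + 1) f t‖
      ≤ 1 / q.factorial * (|x₂ - x₁| ^ q * M * |x₂ - x₁|) := by gcongr
    _ = M * |x₂ - x₁| ^ (q + 1) / q.factorial := by ring

theorem abs_taylorR_two_sub_le_of_layer_bound {b c d h x : ℝ} {z : ℝ → ℝ} (hb : 0 ≤ b)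
    (hd : 0 ≤ d) (hh : 0 ≤ h) (hx : x ∈ Icc h (1 - h)) (hc : 0 ≤ c)
    (hz : ∀ t ∈ Icc (0 : ℝ) 1,
      |iteratedDeriv 3 z t| ≤ c * (1 + d⁻¹ ^ 2 * exp (-(b / d) * (1 - t)))) :
    |taylorR 2 x (x - h) z| ≤ c * (1 + d⁻¹ ^ 2 * exp (-(b / d) * (1 - x))) * h ^ 3 / 2 := by
  have hM : ∀ t ∈ uIoc x (x - h),
      |iteratedDeriv 3 z t| ≤ c * (1 + d⁻¹ ^ 2 * exp (-(b / d) * (1 - x))) := by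
    rintro t ⟨ht₁, ht₂⟩
    simp only [min_eq_right (sub_le_self x hh), max_eq_left (sub_le_self x hh)] at ht₁ ht₂
    refine (hz t ⟨by linarith [hx.1], by linarith [hx.2]⟩).trans ?_
    gcongr c * (1 + _ * exp ?_)
    nlinarith [div_nonneg hb hd]
  simpa [abs_of_nonneg hh, Nat.factorial] using abs_taylorR_le hM

theorem bern_neg (s : ℝ) : Bern (-s) = s / (1 - exp (-s)) := by
  rw [Bern, ← neg_sub, neg_div_neg_eq]

theorem bern_neg_le {b s : ℝ} (hb : 0 < b) (hbs : b ≤ s) :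
    Bern (-s) ≤ s / (1 - exp (-b)) := by
  rw [bern_neg]
  have : exp (-b) < 1 := exp_lt_one_iff.2 (neg_lt_zero.2 hb)
  have : exp (-s) ≤ exp (-b) := exp_le_exp.2 (neg_le_neg hbs)
  gcongr
  linarith

theorem pow_mul_exp_neg_le_factorial {s : ℝ} (hs : 0 ≤ s) (n : ℕ) :
    s ^ n * exp (-s) ≤ n.factorial := by
  rw [exp_neg, ← div_eq_mul_inv, div_le_iff₀ (exp_pos s), ← div_le_iff₀' (by positivity)]
  exact pow_div_factorial_le_exp s hs n

theorem sq_mul_exp_neg_le {b d h : ℝ} (hb : 0 < b) (hd : 0 < d) (hh : 0 < h) :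
    h ^ 2 * d⁻¹ ^ 2 * exp (-(b * h / d)) ≤ 6 / b ^ 3 * (d * h⁻¹) := by
  have key := pow_mul_exp_neg_le_factorial (by positivity : 0 ≤ b * h / d) 3
  have hsplit : h ^ 2 * d⁻¹ ^ 2 * exp (-(b * h / d))
      = d * h⁻¹ / b ^ 3 * ((b * h / d) ^ 3 * exp (-(b * h / d))) := by
    field_simp
  rw [hsplit]
  calc d * h⁻¹ / b ^ 3 * ((b * h / d) ^ 3 * exp (-(b * h / d)))
      ≤ d * h⁻¹ / b ^ 3 * 6 := by gcongr; simpa [Nat.factorial] using key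
    _ = 6 / b ^ 3 * (d * h⁻¹) := by ring

/-- remainder estimate in the coarse-mesh regime `d ≤ h ≤ 1`:
if `|z⁽³⁾(t)| ≤ c₂ (1 + d⁻² exp(−b d⁻¹ (1−t)))` on `[0,1]`, then
`d h⁻² B(−P) |R₂(x, x−h; z)| ≤ C (h² + d h⁻¹ exp(−b d⁻¹ (1−(x+h))))`
with `C = C(b, c₂)`. -/
theorem remainder_estimate_coarse_mesh (b c₂ : ℝ) (hb : 0 < b) (hc₂ : 0 < c₂) :
    ∃ C > (0 : ℝ), ∀ d ∈ Set.Ioc (0 : ℝ) 1, ∀ h : ℝ, d ≤ h → h ≤ 1 →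
      ∀ x ∈ Set.Icc h (1 - h), ∀ z : ℝ → ℝ, ContDiff ℝ 3 z →
        (∀ t ∈ Set.Icc (0 : ℝ) 1,
          |iteratedDeriv 3 z t| ≤ c₂ * (1 + d⁻¹ ^ 2 * Real.exp (-(b / d) * (1 - t)))) →
        d / h ^ 2 * Bern (-(b * h / d)) * |taylorR 2 x (x - h) z|
          ≤ C * (h ^ 2 + d * h⁻¹ * Real.exp (-(b / d) * (1 - (x + h)))) := by
  set K := (1 - exp (-b))⁻¹
  have hK : 0 < K := inv_pos.2 (sub_pos.2 (exp_lt_one_iff.2 (neg_lt_zero.2 hb)))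
  refine ⟨b * K * c₂ / 2 * (1 + 6 / b ^ 3), by positivity, ?_⟩
  rintro d ⟨hd, -⟩ h hdh - x ⟨hhx, hx1⟩ z - hz3
  have hh : 0 < h := hd.trans_le hdh
  set E := exp (-(b / d) * (1 - (x + h)))
  have hR := abs_taylorR_two_sub_le_of_layer_bound hb.le hd.le hh.le ⟨hhx, hx1⟩ hc₂.le hz3
  have hB : Bern (-(b * h / d)) ≤ b * h / d * K :=
    bern_neg_le hb ((le_div_iff₀ hd).2 (mul_le_mul_of_nonneg_left hdh hb.le))
  have hlayer : exp (-(b / d) * (1 - x)) = exp (-(b * h / d)) * E := by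
    rw [← exp_add]; congr 1; field_simp; ring
  calc d / h ^ 2 * Bern (-(b * h / d)) * |taylorR 2 x (x - h) z|
      ≤ d / h ^ 2 * (b * h / d * K) *
          (c₂ * (1 + d⁻¹ ^ 2 * exp (-(b / d) * (1 - x))) * h ^ 3 / 2) := by
        gcongr
    _ = b * K * c₂ / 2 * (h ^ 2 + h ^ 2 * d⁻¹ ^ 2 * exp (-(b * h / d)) * E) := by
        rw [hlayer]; field_simp
    _ ≤ b * K * c₂ / 2 * (h ^ 2 + 6 / b ^ 3 * (d * h⁻¹) * E) := by
        gcongr _ * (_ + ?_ * E)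
        exact sq_mul_exp_neg_le hb hd hh
    _ ≤ b * K * c₂ / 2 * (1 + 6 / b ^ 3) * (h ^ 2 + d * h⁻¹ * E) := by
        rw [mul_assoc (b * K * c₂ / 2)]
        refine mul_le_mul_of_nonneg_left ?_ (by positivity)
        nlinarith [mul_nonneg (by positivity : (0:ℝ) ≤ 6 / b ^ 3) (sq_nonneg h),
          (by positivity : 0 ≤ d * h⁻¹ * E)]
end
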